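/- For all integers n ≥ 1 and 1 ≤ k ≤ n−1, the Dushnik–Miller dimension of the poset M^n_{[0,k]} of multisets with elements in {1,…,n} and total size (counted with multiplicity) at most k, ordered by multiset inclusion, equals N(n, k+1), the minimum cardinality of a (k+1)-suitable set of permutations of {1,…,n}. -/

import Mathlib

/-!
Upper bound: for a `(k+1)`-suitable set `S`, each `σ ∈ S` gives the monotone coordinate
`M ↦ ∑_{x ∈ M} (k+1)^{σ x}`. If `M ≰ M'`, pick `a` with more copies in `M` than in `M'`; the at
most `k` elements where `M'` exceeds `M`, together with `a`, lie in a `(k+1)`-set on which some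
`σ ∈ S` puts `a` on top, and in that coordinate the extra copy of `a` outweighs them all.

Lower bound: from an embedding into `ℝ^d`, sort `Fin n` by the values of the singletons in each
coordinate. For a pointed `(k+1)`-set `(A, a)`, the singleton `{a}` is not below `A \ {a}`, so some
coordinate ranks `a` above `A \ {a}`, hence above every `b ∈ A \ {a}`.
-/

/-- The Dushnik-Miller dimension of a poset `P`: the least `d` such that there is
an order embedding of `P` into `ℝ^d` with the componentwise order. -/
noncomputable def dimDM (P : Type*) [PartialOrder P] : ℕ :=
  sInf {d : ℕ | ∃ f : P → (Fin d → ℝ), ∀ a b : P, (f a ≤ f b ↔ a ≤ b)}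

/-- A set `S` of permutations of `{1,…,n}` (modelled as `Fin n`) is `k`-suitable if for
every pointed `k`-subset `(A, a)` there is `σ ∈ S` with `σ b ≤ σ a` for every `b ∈ A`. -/
def IsSuitable (n k : ℕ) (S : Finset (Equiv.Perm (Fin n))) : Prop :=
  ∀ A : Finset (Fin n), A.card = k → ∀ a ∈ A, ∃ σ ∈ S, ∀ b ∈ A, σ b ≤ σ a

/-- `N(n, k)`: the minimum cardinality of a `k`-suitable set of permutations of `{1,…,n}`. -/
noncomputable def suitableNumber (n k : ℕ) : ℕ :=
  sInf {m : ℕ | ∃ S : Finset (Equiv.Perm (Fin n)), IsSuitable n k S ∧ S.card = m}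

namespace Multiset

variable {α : Type*}

theorem sum_map_mono {M M' : Multiset α} (w : α → ℕ) (h : M ≤ M') :
    (M.map w).sum ≤ (M'.map w).sum := by
  obtain ⟨N, rfl⟩ := le_iff_exists_add.mp h
  simp

theorem sum_map_lt_sum_map_of_mem_sub [DecidableEq α] {M M' : Multiset α} {a : α} {k : ℕ}
    (w : α → ℕ) (hM' : card M' ≤ k) (ha : a ∈ M - M') (hwa : 0 < w a)
    (hw : ∀ x ∈ M' - M, (k + 1) * w x ≤ w a) : (M'.map w).sum < (M.map w).sum := by
  suffices ((M' - M).map w).sum < ((M - M').map w).sum by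
    have h_split (N₁ N₂ : Multiset α) :
        (N₁.map w).sum = ((N₁ - N₂).map w).sum + ((N₁ ∩ N₂).map w).sum := by
      rw [← sum_add, ← map_add, sub_add_inter]
    rw [h_split M M', h_split M' M, inter_comm M' M]
    omega
  have h_excess : (k + 1) * ((M' - M).map w).sum ≤ k * w a := by
    rw [← sum_map_mul_left]
    calc ((M' - M).map fun x => (k + 1) * w x).sum ≤ card (M' - M) • w a := by
          simpa using sum_le_card_nsmul ((M' - M).map fun x => (k + 1) * w x) (w a)
            (by simpa using hw)
      _ ≤ k * w a := by
          rw [smul_eq_mul]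
          exact Nat.mul_le_mul_right _ ((card_le_card (Multiset.sub_le_self M' M)).trans hM')
  have h_deficit : w a ≤ ((M - M').map w).sum := le_sum_of_mem (mem_map_of_mem w ha)
  nlinarith

end Multiset

theorem Tuple.exists_perm_lt_of_lt {n : ℕ} {β : Type*} [LinearOrder β] (g : Fin n → β) :
    ∃ σ : Equiv.Perm (Fin n), ∀ x y, g x < g y → σ x < σ y := by
  refine ⟨(Tuple.sort g)⁻¹, fun x y hxy => lt_of_not_ge fun hyx => hxy.not_ge ?_⟩
  simpa [Equiv.Perm.inv_def] using Tuple.monotone_sort g hyx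

theorem exists_embedding_of_monotone_of_separating {P ι : Type*} [Preorder P] (s : Finset ι)
    (f : ι → P → ℝ) (hmono : ∀ i ∈ s, Monotone (f i))
    (hsep : ∀ a b, ¬ a ≤ b → ∃ i ∈ s, f i b < f i a) :
    ∃ g : P → Fin s.card → ℝ, ∀ a b, g a ≤ g b ↔ a ≤ b := by
  refine ⟨fun a j => f (s.equivFin.symm j) a, fun a b => ⟨fun hab => ?_, fun hab j =>
    hmono _ (s.equivFin.symm j).2 hab⟩⟩
  by_contra hnab
  obtain ⟨i, hi, hlt⟩ := hsep a b hnab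
  exact (hab (s.equivFin ⟨i, hi⟩)).not_gt (by simpa using hlt)

theorem dimDM_le {P : Type*} [PartialOrder P] {d : ℕ} (f : P → Fin d → ℝ)
    (hf : ∀ a b, f a ≤ f b ↔ a ≤ b) : dimDM P ≤ d :=
  Nat.sInf_le ⟨f, hf⟩

theorem exists_embedding_fin_dimDM {P : Type*} [PartialOrder P]
    (h : ∃ d, ∃ f : P → Fin d → ℝ, ∀ a b, f a ≤ f b ↔ a ≤ b) :
    ∃ f : P → Fin (dimDM P) → ℝ, ∀ a b, f a ≤ f b ↔ a ≤ b :=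
  Nat.sInf_mem h

theorem isSuitable_univ (n k : ℕ) : IsSuitable n k Finset.univ := by
  intro A _ a _
  obtain ⟨σ, hσ⟩ := Tuple.exists_perm_lt_of_lt fun x => if x = a then 1 else 0
  refine ⟨σ, Finset.mem_univ σ, fun b _ => ?_⟩
  rcases eq_or_ne b a with rfl | hba
  · rfl
  · exact (hσ b a (by simp [hba])).le

theorem suitableNumber_le {n k : ℕ} {S : Finset (Equiv.Perm (Fin n))} (hS : IsSuitable n k S) :
    suitableNumber n k ≤ S.card :=
  Nat.sInf_le ⟨S, hS, rfl⟩

theorem exists_isSuitable_card_eq_suitableNumber (n k : ℕ) :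
    ∃ S : Finset (Equiv.Perm (Fin n)), IsSuitable n k S ∧ S.card = suitableNumber n k :=
  Nat.sInf_mem (s := {m | ∃ S : Finset (Equiv.Perm (Fin n)), IsSuitable n k S ∧ S.card = m})
    ⟨_, _, isSuitable_univ n k, rfl⟩

section MultisetPoset

variable {n k : ℕ}

theorem exists_embedding_of_isSuitable (hkn : k + 1 ≤ n) {S : Finset (Equiv.Perm (Fin n))}
    (hS : IsSuitable n (k + 1) S) :
    ∃ f : {M : Multiset (Fin n) // Multiset.card M ≤ k} → Fin S.card → ℝ,
      ∀ M M', f M ≤ f M' ↔ M ≤ M' := by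
  classical
  -- weight `(k + 1) ^ σ x`: an element outweighs any `k` elements placed below it by `σ`
  refine exists_embedding_of_monotone_of_separating S
    (fun σ M => ((M.1.map fun x => (k + 1) ^ (σ x : ℕ)).sum : ℝ))
    (fun σ _ M M' h => Nat.cast_le.mpr (Multiset.sum_map_mono _ h)) fun M M' h => ?_
  obtain ⟨a, ha⟩ := Multiset.exists_mem_of_ne_zero (mt tsub_eq_zero_iff_le.mp h)
  have h_card : (insert a (M'.1 - M.1).toFinset).card ≤ k + 1 :=
    (Finset.card_insert_le _ _).trans (Nat.succ_le_succ ((Multiset.toFinset_card_le _).trans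
      ((Multiset.card_le_card (Multiset.sub_le_self _ _)).trans M'.2)))
  obtain ⟨A, hA, hA_card⟩ := Finset.exists_superset_card_eq h_card (by simpa using hkn)
  obtain ⟨σ, hσS, hσ⟩ := hS A hA_card a (hA (Finset.mem_insert_self _ _))
  refine ⟨σ, hσS, ?_⟩
  have h_excess : ∀ x ∈ M'.1 - M.1, (k + 1) * (k + 1) ^ (σ x : ℕ) ≤ (k + 1) ^ (σ a : ℕ) := by
    intro x hx
    have hxa : x ≠ a := by
      rintro rfl
      rw [Multiset.mem_sub] at ha hx
      omega
    have hlt : σ x < σ a := (hσ x (hA (by simp [hx]))).lt_of_ne (σ.injective.ne hxa)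
    rw [← pow_succ']
    exact Nat.pow_le_pow_right k.succ_pos hlt
  exact_mod_cast Multiset.sum_map_lt_sum_map_of_mem_sub _ M'.2 ha (by positivity) h_excess

theorem exists_isSuitable_of_embedding (hk : 1 ≤ k) {d : ℕ}
    (f : {M : Multiset (Fin n) // Multiset.card M ≤ k} → Fin d → ℝ)
    (hf : ∀ M M', f M ≤ f M' ↔ M ≤ M') :
    ∃ S : Finset (Equiv.Perm (Fin n)), IsSuitable n (k + 1) S ∧ S.card ≤ d := by
  classical
  let single (x : Fin n) : {M : Multiset (Fin n) // Multiset.card M ≤ k} := ⟨{x}, by simpa⟩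
  choose σ hσ using fun i => Tuple.exists_perm_lt_of_lt fun x => f (single x) i
  refine ⟨Finset.univ.image σ, fun A hA a ha => ?_, Finset.card_image_le.trans (by simp)⟩
  let rest : {M : Multiset (Fin n) // Multiset.card M ≤ k} :=
    ⟨(A.erase a).val, (Finset.card_erase_of_mem ha).trans_le (by omega)⟩
  have h_single_le {x} : single x ≤ rest ↔ x ∈ A.erase a := Multiset.singleton_le
  obtain ⟨i, hi⟩ : ∃ i, f rest i < f (single a) i := by
    simpa [Pi.le_def] using mt (hf (single a) rest).mp (by simp [h_single_le])
  refine ⟨σ i, Finset.mem_image_of_mem σ (Finset.mem_univ i), fun b hb => ?_⟩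
  rcases eq_or_ne b a with rfl | hba
  · rfl
  · have hb_rest : f (single b) i ≤ f rest i :=
      (hf _ _).mpr (h_single_le.mpr (Finset.mem_erase.mpr ⟨hba, hb⟩)) i
    exact (hσ i b a (hb_rest.trans_lt hi)).le

end MultisetPoset

theorem dimDM_multiset_eq_suitableNumber_general (n k : ℕ) (hk1 : 1 ≤ k)
    (hk2 : k ≤ n - 1) :
    dimDM {M : Multiset (Fin n) // Multiset.card M ≤ k} = suitableNumber n (k + 1) := by
  obtain ⟨S, hS, hS_card⟩ := exists_isSuitable_card_eq_suitableNumber n (k + 1)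
  obtain ⟨f, hf⟩ := exists_embedding_of_isSuitable (by omega) hS
  obtain ⟨g, hg⟩ := exists_embedding_fin_dimDM ⟨_, f, hf⟩
  obtain ⟨S', hS', hS'_card⟩ := exists_isSuitable_of_embedding hk1 g hg
  exact le_antisymm (hS_card ▸ dimDM_le f hf) ((suitableNumber_le hS').trans hS'_card)

/-- `dim(M^n_{[0,k]}) = N(n, k+1)` for `1 ≤ k ≤ n - 1`, where `M^n_{[0,k]}` is the poset
of multisets with elements in `{1,…,n}` of total size at most `k`, ordered by
multiset inclusion (containment with multiplicity). -/
theorem dimDM_multiset_eq_suitableNumber (n k : ℕ) (hn : 1 ≤ n) (hk1 : 1 ≤ k)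
    (hk2 : k ≤ n - 1) :
    dimDM {M : Multiset (Fin n) // Multiset.card M ≤ k} = suitableNumber n (k + 1) :=
  dimDM_multiset_eq_suitableNumber_general n k hk1 hk2
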